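/- arXiv:2310.09845 — 6 statements merged into one kernel-verified Lean document; each statement's English description precedes it below -/
import Mathlib

section
/- Let A ⊆ ℝⁿ, y ∈ A, and let K be a convex cone in ℝⁿ. Then K is a Boltyanski approximating cone to A at y if and only if there exist ε > 0 and a continuous map G : K ∩ B_n(ε) → A such that G(0) = y and G(k) = y + k + o(k) as k → 0 with k ∈ K ∩ B_n(ε). -/
open Set Metric Filter Asymptotics Topology

/-- A convex cone in a real vector space: contains `0`, is convex, and is
invariant under multiplication by nonnegative scalars. -/
def IsConvexCone {E : Type*} [AddCommMonoid E] [Module ℝ E] (C : Set E) : Prop :=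
  (0 : E) ∈ C ∧ Convex ℝ C ∧ ∀ r : ℝ, 0 ≤ r → ∀ c ∈ C, r • c ∈ C

/-- `K` is a Boltyanski approximating cone to `A` at `y`: there are `m : ℕ`, a convex cone
`C ⊆ ℝᵐ`, a linear map `L : ℝᵐ → E` with `K = L(C)`, a `δ > 0` and a continuous map
`F : C ∩ B_m(δ) → A` with `F 0 = y` and `F c = y + L c + o(c)`. -/
def IsBoltyanskiCone {E : Type*} [NormedAddCommGroup E] [NormedSpace ℝ E]
    (A : Set E) (y : E) (K : Set E) : Prop :=
  ∃ (m : ℕ) (C : Set (EuclideanSpace ℝ (Fin m)))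
    (L : EuclideanSpace ℝ (Fin m) →ₗ[ℝ] E) (δ : ℝ)
    (F : EuclideanSpace ℝ (Fin m) → E),
    IsConvexCone C ∧ K = ⇑L '' C ∧ 0 < δ ∧
    ContinuousOn F (C ∩ closedBall 0 δ) ∧
    (∀ c ∈ C ∩ closedBall 0 δ, F c ∈ A) ∧ F 0 = y ∧
    (fun c => F c - y - L c) =o[𝓝[C ∩ closedBall 0 δ] 0] (fun c => c)


/-! Compactness of the unit sphere of the target gives, for every tolerance `γ > 0`, a bound `R`
such that each `k ∈ K = L '' C` has a lift `c ∈ C` with `‖c‖ ≤ R ‖k‖` and `‖L c - k‖ ≤ γ ‖k‖`.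
Since `F c = y + L c + o(c)`, such lifts also make `F c - y - k` small compared with `‖k‖` once
`‖k‖` is below a threshold `τ γ`. Taking tolerances `2⁻ʲ` with thresholds `τ j ↓ 0`, the admissible
lifts of `k` form a convex set, and a lift of `k` with tolerance `2⁻ʲ⁻¹` stays admissible for every
`k'` near `k`; a partition of unity then selects a continuous lift `σ` on `K ∖ {0}`, and
`G = F ∘ σ` works. Conversely `G` itself is a Boltyanski map with `C = K` and `L = id`. -/

section GoodLifts

variable {E V W : Type*} [NormedAddCommGroup E] [NormedSpace ℝ E] [NormedAddCommGroup V]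
  [NormedSpace ℝ V] [NormedAddCommGroup W] {D : Set E} {L : E →ₗ[ℝ] V} {φ : E → W}

/-- The bound on the remainder `φ` is imposed on the whole of `D ∩ closedBall 0 ‖c‖`, not only at
`c`: this makes the set convex. -/
def goodLifts (D : Set E) (L : E →ₗ[ℝ] V) (φ : E → W) (e : ℝ) (k : V) : Set E :=
  {c ∈ D | ‖L c - k‖ ≤ e * ‖k‖ ∧ ∀ c' ∈ D, ‖c'‖ ≤ ‖c‖ → ‖φ c'‖ ≤ e * ‖k‖}

lemma goodLifts_mono {e e' : ℝ} (he : e ≤ e') (k : V) :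
    goodLifts D L φ e k ⊆ goodLifts D L φ e' k := by
  rintro c ⟨hcD, hLc, hφc⟩
  have hee' : e * ‖k‖ ≤ e' * ‖k‖ := mul_le_mul_of_nonneg_right he (norm_nonneg k)
  exact ⟨hcD, hLc.trans hee', fun c' hc' hle => (hφc c' hc' hle).trans hee'⟩

lemma convex_setOf_forall_norm_le_imp (P : E → Prop) :
    Convex ℝ {c : E | ∀ c', ‖c'‖ ≤ ‖c‖ → P c'} := by
  intro x hx z hz a b ha hb hab c' hc'
  have hmax : ‖a • x + b • z‖ ≤ max ‖x‖ ‖z‖ :=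
    calc ‖a • x + b • z‖ ≤ a * ‖x‖ + b * ‖z‖ := by
          simpa [norm_smul, abs_of_nonneg ha, abs_of_nonneg hb] using norm_add_le (a • x) (b • z)
      _ ≤ a * max ‖x‖ ‖z‖ + b * max ‖x‖ ‖z‖ := by gcongr <;> simp
      _ = max ‖x‖ ‖z‖ := by rw [← add_mul, hab, one_mul]
  rcases le_total ‖x‖ ‖z‖ with h | h
  · exact hz c' (hc'.trans (hmax.trans (max_eq_right h).le))
  · exact hx c' (hc'.trans (hmax.trans (max_eq_left h).le))

lemma convex_goodLifts (hD : Convex ℝ D) (e : ℝ) (k : V) : Convex ℝ (goodLifts D L φ e k) := by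
  have hball : Convex ℝ (L ⁻¹' closedBall k (e * ‖k‖)) := (convex_closedBall k _).linear_preimage L
  have hrem := convex_setOf_forall_norm_le_imp (fun c' => c' ∈ D → ‖φ c'‖ ≤ e * ‖k‖)
  convert hD.inter (hball.inter hrem) using 1
  ext c
  simp only [goodLifts, mem_ofPred_eq, mem_inter_iff, mem_preimage, mem_closedBall, dist_eq_norm]
  exact and_congr_right fun _ => and_congr_right fun _ => forall_congr' fun _ => Imp.swap

lemma eventually_mem_goodLifts {e e' : ℝ} (he : e < e') {k₀ : V} (hk₀ : k₀ ≠ 0) {c : E}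
    (hc : c ∈ goodLifts D L φ e k₀) : ∀ᶠ k in 𝓝 k₀, c ∈ goodLifts D L φ e' k := by
  obtain ⟨hcD, hLc, hφc⟩ := hc
  have hee' : e * ‖k₀‖ < e' * ‖k₀‖ := mul_lt_mul_of_pos_right he (norm_pos_iff.2 hk₀)
  have hL : ∀ᶠ k in 𝓝 k₀, ‖L c - k‖ < e' * ‖k‖ :=
    ContinuousAt.eventually_lt (by fun_prop) (by fun_prop) (hLc.trans_lt hee')
  have hφ : ∀ᶠ k in 𝓝 k₀, e * ‖k₀‖ < e' * ‖k‖ :=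
    ContinuousAt.eventually_lt continuousAt_const (by fun_prop) hee'
  filter_upwards [hL, hφ] with k hLk hφk
  exact ⟨hcD, hLk.le, fun c' hc' hle => (hφc c' hc' hle).trans hφk.le⟩

lemma isLittleO_of_eventually_mem_goodLifts {σ : V → E} {l : Filter V}
    (h : ∀ e > 0, ∀ᶠ k in l, σ k ∈ goodLifts D L φ e k) :
    (fun k => φ (σ k)) =o[l] (fun k => k) ∧ (fun k => L (σ k) - k) =o[l] (fun k => k) := by
  constructor <;> refine isLittleO_iff.2 fun e he => (h e he).mono fun k hk => ?_
  · exact hk.2.2 _ hk.1 le_rfl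
  · exact hk.2.1

theorem exists_continuousOn_mem_goodLifts {K : Set V} (hD : Convex ℝ D) {τ : ℕ → ℝ}
    (hτ : Antitone τ) (hτ0 : Tendsto τ atTop (𝓝 0))
    (hgood : ∀ j, ∀ k ∈ K, k ≠ 0 → ‖k‖ ≤ τ j → (goodLifts D L φ ((1 / 2) ^ (j + 1)) k).Nonempty) :
    ∃ σ : V → E, σ 0 = 0 ∧ ContinuousOn σ ((K ∩ closedBall 0 (τ 0)) \ {0}) ∧
      ∀ j, ∀ k ∈ (K ∩ closedBall 0 (τ 0)) \ {0}, ‖k‖ ≤ τ j →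
        σ k ∈ goodLifts D L φ ((1 / 2) ^ j) k := by
  set X := (K ∩ closedBall 0 (τ 0)) \ {0}
  let Φ : X → Set E := fun k => ⋂ j, ⋂ (_ : ‖(k : V)‖ ≤ τ j), goodLifts D L φ ((1 / 2) ^ j) k
  have hΦ : ∀ k, Convex ℝ (Φ k) := fun k =>
    convex_iInter fun j => convex_iInter fun _ => convex_goodLifts hD _ _
  have hloc : ∀ k : X, ∃ c, ∀ᶠ k' in 𝓝 k, c ∈ Φ k' := by
    rintro ⟨k, ⟨hkK, hkτ⟩, hk0 : k ≠ 0⟩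
    obtain ⟨j, hj, hj1⟩ := Nat.exists_not_and_succ_of_not_zero_of_exists
      (p := fun j => τ j < ‖k‖) (not_lt.2 (mem_closedBall_zero_iff.1 hkτ))
      (hτ0.eventually (gt_mem_nhds (norm_pos_iff.2 hk0))).exists
    obtain ⟨c, hc⟩ := hgood j k hkK hk0 (not_lt.1 hj)
    have hnear : ∀ᶠ k' in 𝓝 k, c ∈ goodLifts D L φ ((1 / 2) ^ j) k' ∧ τ (j + 1) < ‖k'‖ :=
      (eventually_mem_goodLifts (pow_lt_pow_right_of_lt_one₀ (by norm_num) (by norm_num)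
        (Nat.lt_succ_self j)) hk0 hc).and ((continuous_norm.tendsto k).eventually (lt_mem_nhds hj1))
    refine ⟨c, (continuous_subtype_val.tendsto _).eventually hnear |>.mono ?_⟩
    rintro k' ⟨hc', hk'⟩
    refine mem_iInter₂.2 fun i hi => goodLifts_mono ?_ _ hc'
    have hij : i ≤ j := by
      by_contra! hji
      exact (hk'.trans_le hi).not_ge (hτ hji)
    exact pow_le_pow_of_le_one (by norm_num) (by norm_num) hij
  obtain ⟨g, hg⟩ := exists_continuous_forall_mem_convex_of_local_const hΦ hloc
  classical
  refine ⟨fun k => if hk : k ∈ X then g ⟨k, hk⟩ else 0, dif_neg (by simp [X]), ?_, ?_⟩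
  · rw [continuousOn_iff_continuous_domRestrict]
    convert g.continuous
    funext k
    exact dif_pos k.2
  · intro j k hk hkj
    simpa only [dif_pos hk] using mem_iInter₂.1 (hg ⟨k, hk⟩) j hkj

end GoodLifts

theorem exists_strictAnti_tendsto_zero_forall {P : ℕ → ℝ → Prop}
    (h : ∀ j, ∀ᶠ s in 𝓝 (0 : ℝ), P j s) :
    ∃ τ : ℕ → ℝ, StrictAnti τ ∧ (∀ j, 0 < τ j) ∧ Tendsto τ atTop (𝓝 0) ∧ ∀ j, P j (τ j) := by
  have hu := tendsto_pow_atTop_nhds_zero_of_lt_one (by norm_num : (0 : ℝ) ≤ 1 / 2) (by norm_num)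
  obtain ⟨ψ, hψ, hP⟩ := extraction_forall_of_eventually fun j => hu.eventually (h j)
  exact ⟨fun j => (1 / 2) ^ ψ j,
    (pow_right_strictAnti₀ (by norm_num) (by norm_num)).comp_strictMono hψ,
    fun j => by positivity, hu.comp hψ.tendsto_atTop, hP⟩

theorem ContinuousOn.of_sdiff_singleton {X Y : Type*} [TopologicalSpace X] [T1Space X]
    [TopologicalSpace Y] {f : X → Y} {s : Set X} {a : X} (h : ContinuousOn f (s \ {a}))
    (ha : ContinuousWithinAt f s a) : ContinuousOn f s := by
  intro x hx
  by_cases hxa : x = a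
  · exact hxa ▸ ha
  · exact continuousWithinAt_sdiff_singleton.1 (h x ⟨hx, hxa⟩)

theorem continuousWithinAt_zero_of_isLittleO {V : Type*} [NormedAddCommGroup V] {G : V → V}
    {s : Set V} (h : (fun k => G k - G 0 - k) =o[𝓝[s] 0] (fun k => k)) :
    ContinuousWithinAt G s 0 := by
  have hid : Tendsto (fun k : V => k) (𝓝[s] 0) (𝓝 0) :=
    tendsto_nhdsWithin_of_tendsto_nhds tendsto_id
  have hsum := (h.trans_tendsto hid).add hid
  rw [add_zero] at hsum
  simpa only [sub_add_cancel, ContinuousWithinAt, tendsto_sub_nhds_zero_iff] using hsum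

section Cone

variable {E V W : Type*} [NormedAddCommGroup E] [NormedSpace ℝ E] [NormedAddCommGroup V]
  [NormedSpace ℝ V] [ProperSpace V] [NormedAddCommGroup W] {C : Set E}

theorem exists_norm_le_mul_and_norm_sub_le (hC : ∀ r : ℝ, 0 < r → ∀ c ∈ C, r • c ∈ C)
    (L : E →ₗ[ℝ] V) {γ : ℝ} (hγ : 0 < γ) :
    ∃ R > 0, ∀ k ∈ L '' C, k ≠ 0 → ∃ c ∈ C, ‖c‖ ≤ R * ‖k‖ ∧ ‖L c - k‖ ≤ γ * ‖k‖ := by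
  set S := closure (L '' C) ∩ sphere (0 : V) 1
  have hS : IsCompact S := (isCompact_sphere 0 1).of_isClosed_subset
    (isClosed_closure.inter isClosed_sphere) inter_subset_right
  have hcover : S ⊆ ⋃ c ∈ C, ball (L c) γ := by
    intro u hu
    obtain ⟨_, ⟨c, hc, rfl⟩, hcu⟩ := Metric.mem_closure_iff.1 hu.1 γ hγ
    exact mem_iUnion₂.2 ⟨c, hc, mem_ball.2 hcu⟩
  obtain ⟨T, hTC, hT, hST⟩ := hS.elim_finite_subcover_image (fun _ _ => isOpen_ball) hcover
  obtain ⟨R, hR, hTR⟩ := hT.isBounded.exists_pos_norm_le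
  refine ⟨R, hR, fun k hkK hk0 => ?_⟩
  have hk : 0 < ‖k‖ := norm_pos_iff.2 hk0
  have hu : ‖k‖⁻¹ • k ∈ S := by
    obtain ⟨c₀, hc₀, rfl⟩ := hkK
    refine ⟨subset_closure ⟨‖L c₀‖⁻¹ • c₀, hC _ (inv_pos.2 hk) _ hc₀, map_smul L _ _⟩, ?_⟩
    simp [norm_smul, hk.ne']
  obtain ⟨c, hcT, hcu⟩ := mem_iUnion₂.1 (hST hu)
  refine ⟨‖k‖ • c, hC _ hk _ (hTC hcT), ?_, ?_⟩
  · rw [norm_smul, norm_norm, mul_comm]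
    exact mul_le_mul_of_nonneg_right (hTR c hcT) hk.le
  · have hrescale : L (‖k‖ • c) - k = ‖k‖ • (L c - ‖k‖⁻¹ • k) := by
      rw [map_smul, smul_sub, smul_inv_smul₀ hk.ne']
    rw [hrescale, norm_smul, norm_norm, mul_comm, ← dist_eq_norm, dist_comm]
    exact mul_le_mul_of_nonneg_right (mem_ball.1 hcu).le hk.le

theorem eventually_goodLifts_nonempty (hC : ∀ r : ℝ, 0 < r → ∀ c ∈ C, r • c ∈ C)
    (L : E →ₗ[ℝ] V) {δ : ℝ} (hδ : 0 < δ) {φ : E → W}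
    (hφ : φ =o[𝓝[C ∩ closedBall 0 δ] 0] (fun c => c)) {e : ℝ} (he : 0 < e) :
    ∀ᶠ s in 𝓝 (0 : ℝ), ∀ k ∈ L '' C, k ≠ 0 → ‖k‖ ≤ s →
      (goodLifts (C ∩ closedBall 0 δ) L φ e k).Nonempty := by
  obtain ⟨R, hR, hlift⟩ := exists_norm_le_mul_and_norm_sub_le hC L he
  obtain ⟨ρ, hρ, hsmall⟩ : ∃ ρ > 0, ∀ c ∈ C ∩ closedBall 0 δ, ‖c‖ < ρ → ‖φ c‖ ≤ e / R * ‖c‖ := by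
    obtain ⟨ρ, hρ, h⟩ := Metric.eventually_nhds_iff.1
      (eventually_nhdsWithin_iff.1 (hφ.bound (div_pos he hR)))
    exact ⟨ρ, hρ, fun c hc hcρ => h (by rwa [dist_zero_right]) hc⟩
  filter_upwards [eventually_le_nhds (show (0 : ℝ) < min ρ δ / (2 * R) by positivity)]
    with s hs k hk hk0 hks
  obtain ⟨c, hc, hcR, hLc⟩ := hlift k hk hk0
  have hcmin : ‖c‖ ≤ min ρ δ / 2 :=
    calc ‖c‖ ≤ R * ‖k‖ := hcR
      _ ≤ R * (min ρ δ / (2 * R)) := by gcongr; exact hks.trans hs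
      _ = min ρ δ / 2 := by field_simp
  have hcD : c ∈ C ∩ closedBall 0 δ :=
    ⟨hc, mem_closedBall_zero_iff.2 (by linarith [min_le_right ρ δ, lt_min hρ hδ])⟩
  refine ⟨c, hcD, hLc, fun c' hc' hle => ?_⟩
  calc ‖φ c'‖ ≤ e / R * ‖c'‖ := hsmall c' hc' (by linarith [min_le_left ρ δ, lt_min hρ hδ])
    _ ≤ e / R * (R * ‖k‖) := by gcongr; exact hle.trans hcR
    _ = e * ‖k‖ := by field_simp

theorem exists_continuousOn_eventually_mem_goodLifts (hC : IsConvexCone C) (L : E →ₗ[ℝ] V)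
    {δ : ℝ} (hδ : 0 < δ) {φ : E → W}
    (hφ : φ =o[𝓝[C ∩ closedBall 0 δ] 0] (fun c => c)) :
    ∃ ε > 0, ∃ σ : V → E, σ 0 = 0 ∧ ContinuousOn σ ((L '' C ∩ closedBall 0 ε) \ {0}) ∧
      MapsTo σ ((L '' C ∩ closedBall 0 ε) \ {0}) (C ∩ closedBall 0 δ) ∧
      ∀ e > 0, ∀ᶠ k in 𝓝[(L '' C ∩ closedBall 0 ε) \ {0}] 0,
        σ k ∈ goodLifts (C ∩ closedBall 0 δ) L φ e k := by
  obtain ⟨τ, hτ, hτpos, hτ0, hgood⟩ := exists_strictAnti_tendsto_zero_forall fun j =>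
    eventually_goodLifts_nonempty (fun r hr => hC.2.2 r hr.le) L hδ hφ
      (e := (1 / 2) ^ (j + 1)) (by positivity)
  obtain ⟨σ, hσ0, hσc, hσgood⟩ := exists_continuousOn_mem_goodLifts
    (hC.2.1.inter (convex_closedBall 0 δ)) hτ.antitone hτ0 hgood
  refine ⟨τ 0, hτpos 0, σ, hσ0, hσc,
    fun k hk => (hσgood 0 k hk (mem_closedBall_zero_iff.1 hk.1.2)).1, fun e he => ?_⟩
  obtain ⟨j, hj⟩ := exists_pow_lt_of_lt_one he (by norm_num : (1 / 2 : ℝ) < 1)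
  filter_upwards [self_mem_nhdsWithin,
    nhdsWithin_le_nhds (closedBall_mem_nhds (0 : V) (hτpos j))] with k hk hkj
  exact goodLifts_mono hj.le _ (hσgood j k hk (mem_closedBall_zero_iff.1 hkj))

theorem IsBoltyanskiCone.exists_continuousOn_isLittleO {A K : Set V} {y : V}
    (h : IsBoltyanskiCone A y K) :
    ∃ ε : ℝ, 0 < ε ∧ ∃ G : V → V, ContinuousOn G (K ∩ closedBall 0 ε) ∧
      (∀ k ∈ K ∩ closedBall 0 ε, G k ∈ A) ∧ G 0 = y ∧
      (fun k => G k - y - k) =o[𝓝[K ∩ closedBall 0 ε] 0] (fun k => k) := by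
  obtain ⟨m, C, L, δ, F, hC, rfl, hδ, hFc, hFA, hF0, hFo⟩ := h
  obtain ⟨ε, hε, σ, hσ0, hσc, hσD, hσgood⟩ :=
    exists_continuousOn_eventually_mem_goodLifts hC L hδ hFo
  have h0 : (0 : V) ∈ L '' C ∩ closedBall 0 ε := ⟨⟨0, hC.1, map_zero L⟩, mem_closedBall_self hε.le⟩
  have hG0 : (F ∘ σ) 0 = y := by simp [hσ0, hF0]
  have hGo : (fun k => (F ∘ σ) k - y - k) =o[𝓝[L '' C ∩ closedBall 0 ε] 0] (fun k => k) := by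
    rw [← insert_eq_of_mem h0, ← insert_sdiff_singleton, isLittleO_insert (by simp [hσ0, hF0])]
    obtain ⟨hφ, hL⟩ := isLittleO_of_eventually_mem_goodLifts hσgood
    exact (hφ.add hL).congr_left fun k => by simp only [Function.comp_apply]; abel
  refine ⟨ε, hε, F ∘ σ, ?_, fun k hk => ?_, hG0, hGo⟩
  · exact (hFc.comp hσc hσD).of_sdiff_singleton
      (continuousWithinAt_zero_of_isLittleO (by simpa only [hG0] using hGo))
  · by_cases hk0 : k = 0
    · simpa [hk0, hσ0] using hFA 0 ⟨hC.1, mem_closedBall_self hδ.le⟩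
    · exact hFA _ (hσD ⟨hk, hk0⟩)

end Cone

theorem boltyanski_iff_general {n : ℕ} (A : Set (EuclideanSpace ℝ (Fin n)))
    (y : EuclideanSpace ℝ (Fin n))
    (K : Set (EuclideanSpace ℝ (Fin n))) (hK : IsConvexCone K) :
    IsBoltyanskiCone A y K ↔
      ∃ ε : ℝ, 0 < ε ∧ ∃ G : EuclideanSpace ℝ (Fin n) → EuclideanSpace ℝ (Fin n),
        ContinuousOn G (K ∩ closedBall 0 ε) ∧
        (∀ k ∈ K ∩ closedBall 0 ε, G k ∈ A) ∧ G 0 = y ∧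
        (fun k => G k - y - k) =o[𝓝[K ∩ closedBall 0 ε] 0] (fun k => k) := by
  refine ⟨IsBoltyanskiCone.exists_continuousOn_isLittleO, ?_⟩
  rintro ⟨ε, hε, G, hGc, hGA, hG0, hGo⟩
  exact ⟨n, K, LinearMap.id, ε, G, hK, by simp, hε, hGc, hGA, hG0, hGo⟩

/-- Equivalent definition of a Boltyanski approximating cone. -/
theorem boltyanski_iff {n : ℕ} (A : Set (EuclideanSpace ℝ (Fin n)))
    (y : EuclideanSpace ℝ (Fin n)) (hy : y ∈ A)
    (K : Set (EuclideanSpace ℝ (Fin n))) (hK : IsConvexCone K) :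
    IsBoltyanskiCone A y K ↔
      ∃ ε : ℝ, 0 < ε ∧ ∃ G : EuclideanSpace ℝ (Fin n) → EuclideanSpace ℝ (Fin n),
        ContinuousOn G (K ∩ closedBall 0 ε) ∧
        (∀ k ∈ K ∩ closedBall 0 ε, G k ∈ A) ∧ G 0 = y ∧
        (fun k => G k - y - k) =o[𝓝[K ∩ closedBall 0 ε] 0] (fun k => k) :=
  boltyanski_iff_general A y K hK
end

section
/- If K is a Boltyanski approximating cone to a set A ⊆ ℝⁿ at a point y ∈ A, then every convex subcone K̂ ⊆ K is also a Boltyanski approximating cone to A at y. -/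
/-! The cone `K' ⊆ K = L(C)` is the image of the convex cone `C ∩ L⁻¹(K')`, and the map `F`
witnessing that `K` is a Boltyanski cone, restricted to this smaller domain, keeps all its
properties. -/

open Set Metric Filter Asymptotics Topology

section ConvexCone

variable {E G : Type*} [AddCommMonoid E] [Module ℝ E] [AddCommMonoid G] [Module ℝ G]

theorem IsConvexCone.inter {C D : Set E} (hC : IsConvexCone C) (hD : IsConvexCone D) :
    IsConvexCone (C ∩ D) :=
  ⟨⟨hC.1, hD.1⟩, hC.2.1.inter hD.2.1,
    fun r hr _ hc => ⟨hC.2.2 r hr _ hc.1, hD.2.2 r hr _ hc.2⟩⟩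

theorem IsConvexCone.preimage {D : Set G} (hD : IsConvexCone D) (L : E →ₗ[ℝ] G) :
    IsConvexCone (L ⁻¹' D) :=
  ⟨by simpa using hD.1, hD.2.1.linear_preimage L,
    fun r hr c hc => by simpa only [mem_preimage, map_smul] using hD.2.2 r hr _ hc⟩

end ConvexCone

theorem IsBoltyanskiCone.mono {E : Type*} [NormedAddCommGroup E] [NormedSpace ℝ E]
    {A : Set E} {y : E} {K K' : Set E} (hK : IsBoltyanskiCone A y K) (hsub : K' ⊆ K)
    (hK' : IsConvexCone K') : IsBoltyanskiCone A y K' := by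
  obtain ⟨m, C, L, δ, F, hC, rfl, hδ, hFcont, hFA, hF0, hFo⟩ := hK
  have hdom : C ∩ L ⁻¹' K' ∩ closedBall 0 δ ⊆ C ∩ closedBall 0 δ :=
    inter_subset_inter_left _ inter_subset_left
  refine ⟨m, C ∩ L ⁻¹' K', L, δ, F, hC.inter (hK'.preimage L), ?_, hδ,
    hFcont.mono hdom, fun c hc => hFA c (hdom hc), hF0, hFo.mono (nhdsWithin_mono _ hdom)⟩
  rw [image_inter_preimage, inter_eq_right.mpr hsub]

/-- Every convex subcone of a Boltyanski approximating cone is itself a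
Boltyanski approximating cone. -/
theorem boltyanski_subcone {n : ℕ} (A : Set (EuclideanSpace ℝ (Fin n)))
    (y : EuclideanSpace ℝ (Fin n))
    (K K' : Set (EuclideanSpace ℝ (Fin n)))
    (hK : IsBoltyanskiCone A y K) (hsub : K' ⊆ K) (hK' : IsConvexCone K') :
    IsBoltyanskiCone A y K' :=
  hK.mono hsub hK'
end

section
/- Let φ₁,…,φ_k : ℝⁿ → ℝ be C¹ maps, let A = {x ∈ ℝⁿ : φ₁(x) = 0, …, φ_k(x) = 0}, and let y ∈ A be a point at which the gradients ∇φ₁(y), …, ∇φ_k(y) are linearly independent. Then the subspace {w ∈ ℝⁿ : ∇φ_i(y)·w = 0 for all i = 1,…,k} is a Boltyanski approximating cone to A at y. -/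
open Set Metric Filter Asymptotics Topology

/-! The gradients being independent, `Φ = (φ₁, …, φₖ)` is strictly differentiable at `y` with
surjective derivative `D`, so the implicit function theorem parametrizes `Φ⁻¹(0)` near `y` by a map
`g` on `ker D` with `g 0 = y` and derivative the inclusion at `0`. Precomposing `g` with the
orthogonal projection onto `ker D` gives the map `F` required with `C = ker D`. -/

theorem ContinuousLinearMap.range_pi_eq_top_of_linearIndependent {K V ι : Type*} [Field K]
    [TopologicalSpace K] [IsTopologicalRing K] [AddCommGroup V] [TopologicalSpace V] [Module K V]
    [Finite ι] {D : ι → V →L[K] K} (hD : LinearIndependent K D) : (pi D).range = ⊤ := by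
  have hcoe : LinearIndependent K fun i => ⇑(D i) :=
    hD.map' (LinearMap.ltoFun K V K K ∘ₗ coeLM K)
      (LinearMap.ker_eq_bot.2 (DFunLike.coe_injective.comp coe_injective))
  rw [← span_flip_eq_top_iff_linearIndependent] at hcoe
  rw [LinearMap.range_eq_map, ← Submodule.span_univ, Submodule.map_span, image_univ]
  exact hcoe

namespace HasStrictFDerivAt

variable {𝕜 E F : Type*} [NontriviallyNormedField 𝕜] [CompleteSpace 𝕜]
  [NormedAddCommGroup E] [NormedSpace 𝕜 E] [CompleteSpace E]
  [NormedAddCommGroup F] [NormedSpace 𝕜 F] [FiniteDimensional 𝕜 F]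
  {f : E → F} {f' : E →L[𝕜] F} {a : E}

theorem eventually_continuousAt_implicitFunction (hf : HasStrictFDerivAt f f' a)
    (hf' : f'.range = ⊤) :
    ∀ᶠ z in 𝓝 (0 : f'.ker), ContinuousAt (hf.implicitFunction f f' hf' (f a)) z := by
  set H := hf.implicitToOpenPartialHomeomorph f f' hf'
  have hpair : Tendsto (fun z : f'.ker => (f a, z)) (𝓝 0) (𝓝 (f a, 0)) :=
    tendsto_const_nhds.prodMk_nhds tendsto_id
  filter_upwards [hpair.eventually
    (H.open_target.mem_nhds (hf.mem_implicitToOpenPartialHomeomorph_target hf'))] with z hz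
  exact (H.continuousAt_symm hz).comp (continuous_const.prodMk continuous_id).continuousAt

theorem eventually_map_implicitFunction_eq (hf : HasStrictFDerivAt f f' a)
    (hf' : f'.range = ⊤) :
    ∀ᶠ z in 𝓝 (0 : f'.ker), f (hf.implicitFunction f f' hf' (f a) z) = f a :=
  (tendsto_const_nhds.prodMk_nhds tendsto_id).eventually (hf.map_implicitFunction_eq hf')

end HasStrictFDerivAt

theorem Submodule.isConvexCone {E : Type*} [AddCommGroup E] [Module ℝ E] (V : Submodule ℝ E) :
    IsConvexCone (V : Set E) :=
  ⟨V.zero_mem, V.convex, fun r _ _ hc => V.smul_mem r hc⟩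

theorem isBoltyanskiCone_range_of_hasFDerivAt {m : ℕ} {E : Type*} [NormedAddCommGroup E]
    [NormedSpace ℝ E] {A : Set E} {V : Submodule ℝ (EuclideanSpace ℝ (Fin m))} {G : V → E}
    {G' : V →L[ℝ] E} (hG : HasFDerivAt G G' 0)
    (hGA : ∀ᶠ z in 𝓝 0, ContinuousAt G z ∧ G z ∈ A) :
    IsBoltyanskiCone A (G 0) (range G') := by
  set P := V.orthogonalProjectionOnto
  have hGAP : ∀ᶠ c in 𝓝 0, ContinuousAt G (P c) ∧ G (P c) ∈ A :=
    P.continuous.tendsto' 0 0 (map_zero P) |>.eventually hGA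
  obtain ⟨δ, hδ, hδA⟩ := nhds_basis_closedBall.eventually_iff.1 hGAP
  refine ⟨m, V, (G'.comp P : _ →L[ℝ] E), δ, G ∘ P, V.isConvexCone, ?_, hδ, ?_, ?_, ?_, ?_⟩
  · have hPV : P '' V = univ := eq_univ_of_forall fun z =>
      ⟨z, z.2, V.orthogonalProjectionOnto_mem_subspace_eq_self z⟩
    rw [ContinuousLinearMap.coe_coe, ContinuousLinearMap.coe_comp, image_comp, hPV, image_univ]
  · exact fun c hc => ((hδA hc.2).1.comp P.continuous.continuousAt).continuousWithinAt
  · exact fun c hc => (hδA hc.2).2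
  · rw [Function.comp_apply, map_zero]
  · have hGP := hasFDerivAt_iff_isLittleO_nhds_zero.1
      (HasFDerivAt.comp (x := 0) (map_zero P ▸ hG) P.hasFDerivAt)
    simpa using hGP.mono nhdsWithin_le_nhds

/-- The tangent space to the zero set of `k` functionals with linearly independent
gradients is a Boltyanski approximating cone. -/
theorem boltyanski_of_level_set {n k : ℕ}
    (φ : Fin k → EuclideanSpace ℝ (Fin n) → ℝ)
    (hφ : ∀ i, ContDiff ℝ 1 (φ i))
    (y : EuclideanSpace ℝ (Fin n))
    (hy : ∀ i, φ i y = 0)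
    (hind : LinearIndependent ℝ (fun i => fderiv ℝ (φ i) y)) :
    IsBoltyanskiCone {x | ∀ i, φ i x = 0} y
      {w | ∀ i, fderiv ℝ (φ i) y w = 0} := by
  set D := ContinuousLinearMap.pi fun i => fderiv ℝ (φ i) y
  have hΦ : HasStrictFDerivAt (fun x i => φ i x) D y :=
    hasStrictFDerivAt_pi.2 fun i => (hφ i).contDiffAt.hasStrictFDerivAt one_ne_zero
  have hD := ContinuousLinearMap.range_pi_eq_top_of_linearIndependent hind
  set g := hΦ.implicitFunction _ D hD (fun i => φ i y)
  have hK : {w | ∀ i, fderiv ℝ (φ i) y w = 0} = range D.ker.subtypeL := by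
    rw [Submodule.coe_subtypeL, Submodule.coe_subtype, Subtype.range_coe]
    ext w
    simp [D, funext_iff]
  have hgA : ∀ᶠ z in 𝓝 0, ContinuousAt g z ∧ g z ∈ {x | ∀ i, φ i x = 0} := by
    filter_upwards [hΦ.eventually_continuousAt_implicitFunction hD,
      hΦ.eventually_map_implicitFunction_eq hD] with z hgz hΦz
    exact ⟨hgz, fun i => (congrFun hΦz i).trans (hy i)⟩
  rw [hK, ← hΦ.implicitFunction_apply_image hD]
  exact isBoltyanskiCone_range_of_hasFDerivAt (hΦ.to_implicitFunction hD).hasFDerivAt hgA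
end

section
/- Let X be a finite-dimensional real vector space and let K₁, K₂ ⊆ X be convex cones. Then K₁ and K₂ are transversal if and only if either K₁ and K₂ are strongly transversal, or both K₁ and K₂ are linear subspaces with K₁ ⊕ K₂ = X (i.e. K₁ + K₂ = X and K₁ ∩ K₂ = {0}). -/
open Set

/-- Two cones are transversal if `K₁ - K₂ = X`. -/
def Transversal {X : Type*} [AddCommGroup X] [Module ℝ X] (K₁ K₂ : Set X) : Prop :=
  {x | ∃ k₁ ∈ K₁, ∃ k₂ ∈ K₂, x = k₁ - k₂} = Set.univ

/-- Two cones are strongly transversal if they are transversal and `K₁ ∩ K₂ ≠ {0}`. -/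
def StronglyTransversal {X : Type*} [AddCommGroup X] [Module ℝ X] (K₁ K₂ : Set X) : Prop :=
  Transversal K₁ K₂ ∧ K₁ ∩ K₂ ≠ {0}

/-! If `K₁ ∩ K₂ = {0}`, transversality forces each cone to be closed under negation, hence a
linear subspace, and for such `K₂` the sets `K₁ - K₂` and `K₁ + K₂` coincide. -/

section

variable {X : Type*} [AddCommGroup X]

lemma setOf_add_eq_setOf_sub (K₁ : Set X) {K₂ : Set X} (hneg : ∀ x ∈ K₂, -x ∈ K₂) :
    {x | ∃ k₁ ∈ K₁, ∃ k₂ ∈ K₂, x = k₁ + k₂} = {x | ∃ k₁ ∈ K₁, ∃ k₂ ∈ K₂, x = k₁ - k₂} := by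
  ext x
  constructor
  · rintro ⟨a, ha, b, hb, rfl⟩
    exact ⟨a, ha, -b, hneg b hb, (sub_neg_eq_add a b).symm⟩
  · rintro ⟨a, ha, b, hb, rfl⟩
    exact ⟨a, ha, -b, hneg b hb, sub_eq_add_neg a b⟩

variable [Module ℝ X]

lemma IsConvexCone.add_mem {K : Set X} (h : IsConvexCone K) {a b : X} (ha : a ∈ K)
    (hb : b ∈ K) : a + b ∈ K := by
  have hmid : (1 / 2 : ℝ) • a + (1 / 2 : ℝ) • b ∈ K :=
    h.2.1 ha hb (by norm_num) (by norm_num) (by norm_num)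
  have := h.2.2 2 (by norm_num) _ hmid
  rwa [smul_add, smul_smul, smul_smul, show (2 : ℝ) * (1 / 2) = 1 by norm_num,
    one_smul, one_smul] at this

def IsConvexCone.toSubmodule {K : Set X} (h : IsConvexCone K) (hneg : ∀ x ∈ K, -x ∈ K) :
    Submodule ℝ X where
  carrier := K
  add_mem' := h.add_mem
  zero_mem' := h.1
  smul_mem' r x hx := by
    rcases le_or_gt 0 r with hr | hr
    · exact h.2.2 r hr x hx
    · rw [← neg_smul_neg]
      exact h.2.2 (-r) (by linarith) _ (hneg x hx)

namespace Transversal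

variable {K₁ K₂ : Set X}

lemma exists_eq_sub (hT : Transversal K₁ K₂) (x : X) :
    ∃ k₁ ∈ K₁, ∃ k₂ ∈ K₂, x = k₁ - k₂ :=
  eq_univ_iff_forall.mp hT x

lemma symm (hT : Transversal K₁ K₂) : Transversal K₂ K₁ := by
  refine eq_univ_of_forall fun x => ?_
  obtain ⟨a, ha, b, hb, hab⟩ := hT.exists_eq_sub (-x)
  exact ⟨b, hb, a, ha, by rw [← neg_sub, ← hab, neg_neg]⟩

/-- Write `-k = a - b`; then `b = a + k` lies in `K₁ ∩ K₂`, so `b = 0` and `-k = a ∈ K₁`. -/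
lemma neg_mem_left (hT : Transversal K₁ K₂) (h₁ : IsConvexCone K₁)
    (hcap : K₁ ∩ K₂ ⊆ {0}) {k : X} (hk : k ∈ K₁) : -k ∈ K₁ := by
  obtain ⟨a, ha, b, hb, hab⟩ := hT.exists_eq_sub (-k)
  have hb_eq : b = a + k := by rw [← sub_neg_eq_add a k, hab, sub_sub_cancel]
  have hb_zero : b = 0 := hcap ⟨hb_eq ▸ h₁.add_mem ha hk, hb⟩
  rwa [hab, hb_zero, sub_zero]

lemma neg_mem_right (hT : Transversal K₁ K₂) (h₂ : IsConvexCone K₂)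
    (hcap : K₁ ∩ K₂ ⊆ {0}) {k : X} (hk : k ∈ K₂) : -k ∈ K₂ :=
  hT.symm.neg_mem_left h₂ (inter_comm K₁ K₂ ▸ hcap) hk

end Transversal

end

theorem transversal_iff_general {X : Type*} [AddCommGroup X] [Module ℝ X]
    (K₁ K₂ : Set X)
    (h₁ : IsConvexCone K₁) (h₂ : IsConvexCone K₂) :
    Transversal K₁ K₂ ↔
      (StronglyTransversal K₁ K₂ ∨
        ((∃ S₁ : Submodule ℝ X, K₁ = ↑S₁) ∧ (∃ S₂ : Submodule ℝ X, K₂ = ↑S₂) ∧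
          {x | ∃ k₁ ∈ K₁, ∃ k₂ ∈ K₂, x = k₁ + k₂} = Set.univ ∧
          K₁ ∩ K₂ = {0})) := by
  constructor
  · intro hT
    by_cases hcap : K₁ ∩ K₂ = {0}
    · have hneg₁ : ∀ x ∈ K₁, -x ∈ K₁ := fun _ => hT.neg_mem_left h₁ hcap.subset
      have hneg₂ : ∀ x ∈ K₂, -x ∈ K₂ := fun _ => hT.neg_mem_right h₂ hcap.subset
      exact Or.inr ⟨⟨h₁.toSubmodule hneg₁, rfl⟩, ⟨h₂.toSubmodule hneg₂, rfl⟩,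
        (setOf_add_eq_setOf_sub K₁ hneg₂).trans hT, hcap⟩
    · exact Or.inl ⟨hT, hcap⟩
  · rintro (⟨hT, -⟩ | ⟨-, ⟨S₂, rfl⟩, hsum, -⟩)
    · exact hT
    · exact (setOf_add_eq_setOf_sub K₁ fun _ => S₂.neg_mem).symm.trans hsum

/-- Transversality holds iff either strong transversality holds, or both cones are
linear subspaces and `K₁ ⊕ K₂ = X` (i.e. `K₁ + K₂ = X` and `K₁ ∩ K₂ = {0}`). -/
theorem transversal_iff {X : Type*} [AddCommGroup X] [Module ℝ X]
    [FiniteDimensional ℝ X] (K₁ K₂ : Set X)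
    (h₁ : IsConvexCone K₁) (h₂ : IsConvexCone K₂) :
    Transversal K₁ K₂ ↔
      (StronglyTransversal K₁ K₂ ∨
        ((∃ S₁ : Submodule ℝ X, K₁ = ↑S₁) ∧ (∃ S₂ : Submodule ℝ X, K₂ = ↑S₂) ∧
          {x | ∃ k₁ ∈ K₁, ∃ k₂ ∈ K₂, x = k₁ + k₂} = Set.univ ∧
          K₁ ∩ K₂ = {0})) :=
  transversal_iff_general K₁ K₂ h₁ h₂
end

section
/- Let X be a finite-dimensional real vector space and let K₁, K₂ ⊆ X be convex cones. Then K₁ and K₂ are not transversal if and only if K₁ and K₂ are linearly separable, i.e. there exists a nonzero linear form p ∈ X* such that p·k₁ ≥ 0 for all k₁ ∈ K₁ and p·k₂ ≤ 0 for all k₂ ∈ K₂. -/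
open Set

/-!
Non-transversality of `K₁` and `K₂` says that the convex cone `K₁ - K₂` is proper, and a linear
form separates `K₁` from `K₂` exactly when it is nonnegative on `K₁ - K₂`. So everything reduces to
showing that a proper convex cone `C` in finite dimension lies in a closed half-space through `0`.
The closure of `C` is still proper: a convex set with dense closure has full affine span, hence
nonempty interior, and then it has the same interior as its closure. Farkas' lemma then separates a
point outside the closure from the closed cone.
-/

open scoped Pointwise

theorem Convex.closure_ne_univ {E : Type*} [NormedAddCommGroup E] [NormedSpace ℝ E]
    [FiniteDimensional ℝ E] {s : Set E} (hs : Convex ℝ s) (hs_ne : s ≠ univ) :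
    closure s ≠ univ := by
  intro hdense
  have hspan : affineSpan ℝ s = ⊤ := by
    rw [← AffineSubspace.coe_eq_univ_iff, ← univ_subset_iff, ← hdense]
    exact closure_minimal (subset_affineSpan ℝ s) (affineSpan ℝ s).closed_of_finiteDimensional
  have hint : (interior s).Nonempty := hs.interior_nonempty_iff_affineSpan_eq_top.2 hspan
  apply hs_ne
  rw [← interior_eq_univ, ← hs.interior_closure_eq_interior_of_nonempty_interior hint, hdense,
    interior_univ]

theorem Module.Dual.exists_apply_neg_of_ne_zero {𝕜 E : Type*} [Field 𝕜] [LinearOrder 𝕜]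
    [IsStrictOrderedRing 𝕜] [AddCommGroup E] [Module 𝕜 E] {f : Module.Dual 𝕜 E} (hf : f ≠ 0) :
    ∃ x, f x < 0 := by
  obtain ⟨x, hx⟩ := DFunLike.ne_iff.1 hf
  refine ⟨-(f x) • x, ?_⟩
  simp only [map_smul, smul_eq_mul, neg_mul, neg_lt_zero]
  exact mul_self_pos.2 hx

namespace PointedCone

theorem exists_strongDual_ne_zero_nonneg_of_ne_top {E : Type*} [NormedAddCommGroup E]
    [NormedSpace ℝ E] [FiniteDimensional ℝ E] {C : PointedCone ℝ E} (hC : C ≠ ⊤) :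
    ∃ f : StrongDual ℝ E, f ≠ 0 ∧ ∀ x ∈ C, 0 ≤ f x := by
  have hclosure : closure (C : Set E) ≠ univ :=
    C.convex.closure_ne_univ (mt Submodule.coe_eq_univ.1 hC)
  obtain ⟨x₀, hx₀⟩ := (ne_univ_iff_exists_notMem _).1 hclosure
  obtain ⟨f, hf_nonneg, hf_x₀⟩ :=
    ProperCone.hyperplane_separation_point (Submodule.closure C) (x₀ := x₀) hx₀
  exact ⟨f, by rintro rfl; simp at hf_x₀, fun x hx => hf_nonneg x (subset_closure hx)⟩

theorem exists_dual_ne_zero_nonneg_of_ne_top {E : Type*} [AddCommGroup E] [Module ℝ E]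
    [FiniteDimensional ℝ E] {C : PointedCone ℝ E} (hC : C ≠ ⊤) :
    ∃ f : Module.Dual ℝ E, f ≠ 0 ∧ ∀ x ∈ C, 0 ≤ f x := by
  -- `E` carries no topology: transport the problem to `Fin n → ℝ`.
  let e := (Module.finBasis ℝ E).equivFun
  have hC' : C.comap e.symm.toLinearMap ≠ ⊤ := by
    refine fun htop => hC (eq_top_iff.2 fun x _ => ?_)
    simpa using (htop ▸ Submodule.mem_top : e x ∈ C.comap e.symm.toLinearMap)
  obtain ⟨f, hf, hf_nonneg⟩ := exists_strongDual_ne_zero_nonneg_of_ne_top hC'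
  refine ⟨f.toLinearMap ∘ₗ e.toLinearMap, fun h => hf ?_,
    fun x hx => hf_nonneg (e x) (by simpa using hx)⟩
  ext y
  simpa using LinearMap.congr_fun h (e.symm y)

theorem ne_top_iff_exists_dual_ne_zero_nonneg {E : Type*} [AddCommGroup E] [Module ℝ E]
    [FiniteDimensional ℝ E] (C : PointedCone ℝ E) :
    C ≠ ⊤ ↔ ∃ f : Module.Dual ℝ E, f ≠ 0 ∧ ∀ x ∈ C, 0 ≤ f x := by
  refine ⟨exists_dual_ne_zero_nonneg_of_ne_top, ?_⟩
  rintro ⟨f, hf, hf_nonneg⟩ rfl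
  obtain ⟨x, hx⟩ := Module.Dual.exists_apply_neg_of_ne_zero hf
  exact (hf_nonneg x Submodule.mem_top).not_gt hx

end PointedCone

namespace IsConvexCone

section

variable {E : Type*} [AddCommMonoid E] [Module ℝ E] {C : Set E} (hC : IsConvexCone C)

def toPointedCone : PointedCone ℝ E where
  carrier := C
  zero_mem' := hC.1
  add_mem' {a b} ha hb := by
    have hmid := hC.2.1 ha hb (by norm_num : (0 : ℝ) ≤ 1 / 2) (by norm_num : (0 : ℝ) ≤ 1 / 2)
      (by norm_num)
    convert hC.2.2 2 zero_le_two _ hmid using 1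
    module
  smul_mem' r c hc := hC.2.2 r r.2 c hc

theorem coe_toPointedCone : (hC.toPointedCone : Set E) = C := rfl

theorem mem_toPointedCone {x : E} : x ∈ hC.toPointedCone ↔ x ∈ C := .rfl

end

theorem sub {E : Type*} [AddCommGroup E] [Module ℝ E] {K₁ K₂ : Set E} (h₁ : IsConvexCone K₁)
    (h₂ : IsConvexCone K₂) : IsConvexCone (K₁ - K₂) := by
  refine ⟨⟨0, h₁.1, 0, h₂.1, sub_zero 0⟩, h₁.2.1.sub h₂.2.1, ?_⟩
  rintro r hr _ ⟨a, ha, b, hb, rfl⟩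
  exact ⟨r • a, h₁.2.2 r hr a ha, r • b, h₂.2.2 r hr b hb, (smul_sub r a b).symm⟩

end IsConvexCone

theorem transversal_iff_sub_eq_univ {X : Type*} [AddCommGroup X] [Module ℝ X] (K₁ K₂ : Set X) :
    Transversal K₁ K₂ ↔ K₁ - K₂ = univ := by
  have hsub : {x | ∃ k₁ ∈ K₁, ∃ k₂ ∈ K₂, x = k₁ - k₂} = K₁ - K₂ := by
    ext x
    simp only [mem_ofPred_eq, mem_sub, eq_comm]
  rw [Transversal, hsub]

theorem forall_mem_sub_nonneg_iff {X : Type*} [AddCommGroup X] [Module ℝ X] {K₁ K₂ : Set X}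
    (h₁ : (0 : X) ∈ K₁) (h₂ : (0 : X) ∈ K₂) (p : Module.Dual ℝ X) :
    (∀ x ∈ K₁ - K₂, 0 ≤ p x) ↔ (∀ k ∈ K₁, 0 ≤ p k) ∧ (∀ k ∈ K₂, p k ≤ 0) := by
  refine ⟨fun h => ⟨fun k hk => ?_, fun k hk => ?_⟩, ?_⟩
  · simpa using h (k - 0) (sub_mem_sub hk h₂)
  · simpa using h (0 - k) (sub_mem_sub h₁ hk)
  · rintro ⟨hK₁, hK₂⟩ _ ⟨k₁, hk₁, k₂, hk₂, rfl⟩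
    simpa using (hK₂ k₂ hk₂).trans (hK₁ k₁ hk₁)

/-- Two convex cones in a finite-dimensional real vector space are not transversal
iff they are linearly separable. -/
theorem not_transversal_iff_linearly_separable {X : Type*} [AddCommGroup X] [Module ℝ X]
    [FiniteDimensional ℝ X] (K₁ K₂ : Set X)
    (h₁ : IsConvexCone K₁) (h₂ : IsConvexCone K₂) :
    ¬ Transversal K₁ K₂ ↔
      ∃ p : Module.Dual ℝ X, p ≠ 0 ∧ (∀ k ∈ K₁, 0 ≤ p k) ∧ (∀ k ∈ K₂, p k ≤ 0) := by
  have hC := h₁.sub h₂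
  rw [transversal_iff_sub_eq_univ, ← hC.coe_toPointedCone, Submodule.coe_eq_univ,
    ← ne_eq, PointedCone.ne_top_iff_exists_dual_ne_zero_nonneg]
  simp only [hC.mem_toPointedCone, forall_mem_sub_nonneg_iff h₁.1 h₂.1]
end

section
/- (Kuhn–Tucker condition) Let Ψ, φ₁,…,φ_k, h₁,…,h_r : ℝⁿ → ℝ be C¹ maps, let S = {x ∈ ℝⁿ : φ₁(x) = 0,…,φ_k(x) = 0, h₁(x) ≤ 0,…,h_r(x) ≤ 0}, and let x⋆ ∈ S be a local minimum point of Ψ restricted to S. Suppose that for a (possibly empty) subset {i₁,…,i_q} ⊆ {1,…,r} one has h_{i₁}(x⋆) = 0,…,h_{i_q}(x⋆) = 0, that h_j(x⋆) < 0 for every j ∈ {1,…,r}\{i₁,…,i_q}, and that the gradients ∇h_{i₁}(x⋆),…,∇h_{i_q}(x⋆), ∇φ₁(x⋆),…,∇φ_k(x⋆) are linearly independent. Then there exist real numbers α₁,…,α_k ∈ ℝ, β₁,…,β_q ≤ 0 and λ_c ≤ 0, not all zero, such that Σ_{i=1}^k α_i ∇φ_i(x⋆) + Σ_{j=1}^q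 β_j ∇h_{i_j}(x⋆) + λ_c ∇Ψ(x⋆) = 0. -/
/-!
Near `x⋆` the inactive constraints stay strictly negative and can be dropped. Since the gradients
of the equality constraints are linearly independent, the implicit function theorem turns every
direction `v` with `∇φᵢ(x⋆) v = 0` and `∇h_j(x⋆) v < 0` on the active constraints into the velocity
of a feasible curve, and closedness of the tangent cone extends this to `∇h_j(x⋆) v ≤ 0`. Hence
`∇Ψ(x⋆) v ≥ 0` on that polyhedral cone. A biorthogonal family for the linearly independent active
gradients then writes `∇Ψ(x⋆)` as their combination, with nonpositive coefficients on the
inequality constraints; take `λ_c = -1`.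
-/

open Set Filter Topology NNReal

theorem HasDerivAt.eventually_lt_of_neg {f : ℝ → ℝ} {f' x : ℝ} (hf : HasDerivAt f f' x)
    (hf' : f' < 0) : ∀ᶠ t in 𝓝[>] x, f t < f x := by
  filter_upwards [hf.hasDerivWithinAt.limsup_slope_le' (lt_irrefl x) hf', self_mem_nhdsWithin]
    with t hslope (ht : x < t)
  rw [slope_def_field, div_neg_iff] at hslope
  rcases hslope with ⟨-, hneg⟩ | ⟨hlt, -⟩ <;> linarith

section NormedSpace

variable {𝕜 E : Type*} [NontriviallyNormedField 𝕜] [NormedAddCommGroup E] [NormedSpace 𝕜 E]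

theorem LinearIndependent.exists_forall_apply_eq {ι : Type*} [Finite ι] {f : ι → StrongDual 𝕜 E}
    (hf : LinearIndependent 𝕜 f) (c : ι → 𝕜) : ∃ v, ∀ i, f i v = c i := by
  have hf' : LinearIndependent 𝕜 fun i => ⇑(f i) :=
    hf.map' (LinearMap.ltoFun 𝕜 E 𝕜 𝕜 ∘ₗ ContinuousLinearMap.coeLM 𝕜)
      (LinearMap.ker_eq_bot.2 fun _ _ h => ContinuousLinearMap.ext (congrFun h))
  have hspan := span_flip_eq_top_iff_linearIndependent.2 hf'
  set T : E →ₗ[𝕜] ι → 𝕜 := LinearMap.pi fun i => (f i : E →ₗ[𝕜] 𝕜)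
  have hT : range (flip fun i => ⇑(f i)) = (LinearMap.range T : Set (ι → 𝕜)) := rfl
  rw [hT, Submodule.span_eq] at hspan
  obtain ⟨v, hv⟩ := LinearMap.range_eq_top.1 hspan c
  exact ⟨v, congrFun hv⟩

theorem StrongDual.eq_sum_smul_of_biorthogonal {ι : Type*} [Fintype ι] [DecidableEq ι]
    {f : ι → StrongDual 𝕜 E} {e : ι → E} (he : ∀ i j, f i (e j) = (Pi.single j 1 : ι → 𝕜) i)
    {L : StrongDual 𝕜 E} (hL : ∀ w, (∀ i, f i w = 0) → L w = 0) :
    L = ∑ i, L (e i) • f i := by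
  ext v
  have := hL (v - ∑ i, f i v • e i) fun j => by simp [he, Pi.single_apply]
  simpa [sub_eq_zero, mul_comm] using this

end NormedSpace

section RealNormedSpace

variable {E : Type*} [NormedAddCommGroup E] [NormedSpace ℝ E]

theorem LinearIndependent.exists_eq_sum_of_forall_nonneg {ι : Type*} [Fintype ι]
    {f : ι → StrongDual ℝ E} (hf : LinearIndependent ℝ f) (P : Set ι) {L : StrongDual ℝ E}
    (hL : ∀ v, (∀ i ∈ P, f i v ≤ 0) → (∀ i ∉ P, f i v = 0) → 0 ≤ L v) :
    ∃ c : ι → ℝ, (∀ i ∈ P, c i ≤ 0) ∧ L = ∑ i, c i • f i := by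
  classical
  choose e he using fun j => hf.exists_forall_apply_eq (Pi.single j 1)
  have hker : ∀ w, (∀ i, f i w = 0) → L w = 0 := fun w hw =>
    le_antisymm (by simpa [hw] using hL (-w)) (hL w (fun i _ => (hw i).le) fun i _ => hw i)
  refine ⟨fun i => L (e i), fun i hi => ?_,
    StrongDual.eq_sum_smul_of_biorthogonal (fun i j => he j i) hker⟩
  have := hL (-e i) (fun j _ => ?_) fun j hj => ?_
  · simpa using this
  · rw [map_neg, he, neg_nonpos, Pi.single_apply]
    split_ifs <;> norm_num
  · simp [he, show j ≠ i by rintro rfl; exact hj hi]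

theorem HasDerivAt.mem_posTangentConeAt {γ : ℝ → E} {v : E} {s : Set E}
    (hγ : HasDerivAt γ v 0) (hs : ∀ᶠ t in 𝓝[>] 0, γ t ∈ s) :
    v ∈ posTangentConeAt s (γ 0) := by
  have hcoe : Tendsto ((↑) : ℝ≥0 → ℝ) (𝓝[>] 0) (𝓝[>] 0) := by
    have := (NNReal.map_coe_nhdsGT 0).le; rwa [NNReal.coe_zero] at this
  have hslope : Tendsto (slope γ 0) (𝓝[>] 0) (𝓝 v) :=
    (hasDerivAt_iff_tendsto_slope.1 hγ).mono_left (nhdsWithin_mono _ fun t ht => ne_of_gt ht)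
  refine mem_tangentConeAt_of_seq (𝓝[>] 0) (fun t : ℝ≥0 => t⁻¹) (fun t => γ t - γ 0) ?_ ?_ ?_
  · have := ((hγ.continuousAt.tendsto.mono_left nhdsWithin_le_nhds).comp hcoe).sub_const (γ 0)
    simpa using this
  · filter_upwards [hcoe.eventually hs] with t ht using by simpa using ht
  · convert hslope.comp hcoe using 2 with t
    simp [slope_def_module, NNReal.smul_def]

theorem isClosed_posTangentConeAt (s : Set E) (x : E) : IsClosed (posTangentConeAt s x) := by
  rw [posTangentConeAt, tangentConeAt_eq_biInter_closure]
  exact isClosed_biInter fun _ _ => isClosed_closure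

theorem HasStrictFDerivAt.exists_hasDerivAt_eventually_eq [CompleteSpace E] {F : Type*}
    [NormedAddCommGroup F] [NormedSpace ℝ F] [FiniteDimensional ℝ F] {f : E → F}
    {f' : E →L[ℝ] F} {a v : E} (hf : HasStrictFDerivAt f f' a) (hf' : f'.range = ⊤)
    (hv : f' v = 0) : ∃ γ : ℝ → E, γ 0 = a ∧ HasDerivAt γ v 0 ∧ ∀ᶠ t in 𝓝 0, f (γ t) = f a := by
  set w : f'.ker := ⟨v, hv⟩
  have hline : HasDerivAt (fun t : ℝ => t • w) w 0 := by
    simpa using (hasDerivAt_id (0 : ℝ)).smul_const w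
  refine ⟨fun t => hf.implicitFunction f f' hf' (f a) (t • w), by simp, ?_, ?_⟩
  · exact (hf.to_implicitFunction hf').hasFDerivAt.comp_hasDerivAt_of_eq (0 : ℝ) hline
      (zero_smul ℝ w).symm
  · have hlim : Tendsto (fun t : ℝ => (f a, t • w)) (𝓝 0) (𝓝 (f a, 0)) :=
      tendsto_const_nhds.prodMk_nhds (by simpa using hline.continuousAt.tendsto)
    exact hlim.eventually (hf.map_implicitFunction_eq hf')

end RealNormedSpace

def constraintSet {E K J : Type*} (φ : K → E → ℝ) (g : J → E → ℝ) : Set E :=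
  {x | (∀ i, φ i x = 0) ∧ ∀ j, g j x ≤ 0}

theorem IsLocalMinOn.constraintSet_drop_inactive {E K J : Type*} [TopologicalSpace E] [Finite J]
    {Ψ : E → ℝ} {φ : K → E → ℝ} {h : J → E → ℝ} {x : E}
    (hmin : IsLocalMinOn Ψ (constraintSet φ h) x)
    (I : Finset J) (hcont : ∀ j ∉ I, ContinuousAt (h j) x) (hinact : ∀ j ∉ I, h j x < 0) :
    IsLocalMinOn Ψ (constraintSet φ fun j : I => h j) x := by
  have hU : {y | ∀ j ∉ I, h j y < 0} ∈ 𝓝 x := eventually_all.2 fun j => by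
    by_cases hj : j ∈ I
    · exact .of_forall fun _ hj' => absurd hj hj'
    · filter_upwards [(hcont j hj).eventually_lt continuousAt_const (hinact j hj)] with y hy _
      exact hy
  have hsub : constraintSet φ (fun j : I => h j) ∩ {y | ∀ j ∉ I, h j y < 0} ⊆
      constraintSet φ h := fun y ⟨⟨hyφ, hyI⟩, hyU⟩ =>
    ⟨hyφ, fun j => by_cases (fun hj : j ∈ I => hyI ⟨j, hj⟩) fun hj => (hyU j hj).le⟩
  have := hmin.on_subset hsub
  rwa [IsLocalMinOn, IsMinFilter, ← nhdsWithin_restrict' _ hU] at this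

section ActiveConstraints

variable {E : Type*} [NormedAddCommGroup E] [NormedSpace ℝ E] [CompleteSpace E]
  {K J : Type*} [Fintype K] [Fintype J]
  {φ : K → E → ℝ} {φ' : K → StrongDual ℝ E} {g : J → E → ℝ} {g' : J → StrongDual ℝ E} {x : E}

theorem mem_posTangentConeAt_constraintSet_of_lt (hφ : ∀ i, HasStrictFDerivAt (φ i) (φ' i) x)
    (hφ' : LinearIndependent ℝ φ') (hφx : ∀ i, φ i x = 0) (hg : ∀ j, HasFDerivAt (g j) (g' j) x)
    (hgx : ∀ j, g j x = 0) {v : E} (hφv : ∀ i, φ' i v = 0) (hgv : ∀ j, g' j v < 0) :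
    v ∈ posTangentConeAt (constraintSet φ g) x := by
  have hΦ : HasStrictFDerivAt (fun y i => φ i y) (ContinuousLinearMap.pi φ') x :=
    hasStrictFDerivAt_pi.2 hφ
  have hrange : (ContinuousLinearMap.pi φ').range = ⊤ :=
    LinearMap.range_eq_top.2 fun c => (hφ'.exists_forall_apply_eq c).imp fun _ => funext
  obtain ⟨γ, rfl, hγ, hγφ⟩ := hΦ.exists_hasDerivAt_eventually_eq hrange (funext hφv)
  refine hγ.mem_posTangentConeAt ?_
  have hγg : ∀ᶠ t in 𝓝[>] 0, ∀ j, g j (γ t) < 0 := eventually_all.2 fun j => by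
    simpa [hgx j] using ((hg j).comp_hasDerivAt 0 hγ).eventually_lt_of_neg (hgv j)
  filter_upwards [hγg, nhdsWithin_le_nhds hγφ] with t hneg heq
  exact ⟨fun i => (congrFun heq i).trans (hφx i), fun j => (hneg j).le⟩

theorem mem_posTangentConeAt_constraintSet (hφ : ∀ i, HasStrictFDerivAt (φ i) (φ' i) x)
    (hφx : ∀ i, φ i x = 0) (hg : ∀ j, HasFDerivAt (g j) (g' j) x) (hgx : ∀ j, g j x = 0)
    (hind : LinearIndependent ℝ (Sum.elim g' φ')) {v : E} (hφv : ∀ i, φ' i v = 0)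
    (hgv : ∀ j, g' j v ≤ 0) : v ∈ posTangentConeAt (constraintSet φ g) x := by
  obtain ⟨u, hu⟩ := hind.exists_forall_apply_eq (Sum.elim (fun _ => -1) fun _ => 0)
  have hlim : Tendsto (fun ε : ℝ => v + ε • u) (𝓝[>] 0) (𝓝 v) := by
    have hcont : Continuous fun ε : ℝ => v + ε • u := by fun_prop
    simpa using (hcont.tendsto 0).mono_left nhdsWithin_le_nhds
  refine (isClosed_posTangentConeAt _ _).mem_of_tendsto hlim ?_
  filter_upwards [self_mem_nhdsWithin] with ε (hε : 0 < ε)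
  refine mem_posTangentConeAt_constraintSet_of_lt hφ (hind.comp _ Sum.inr_injective) hφx hg hgx
    (fun i => ?_) fun j => ?_
  · simp [hφv i, show φ' i u = 0 from hu (.inr i)]
  · have huj : g' j u = -1 := hu (.inl j)
    rw [map_add, map_smul, huj, smul_eq_mul]
    linarith [hgv j]

theorem IsLocalMinOn.exists_multipliers {Ψ : E → ℝ} {Ψ' : StrongDual ℝ E}
    (hmin : IsLocalMinOn Ψ (constraintSet φ g) x) (hΨ : HasFDerivAt Ψ Ψ' x)
    (hφ : ∀ i, HasStrictFDerivAt (φ i) (φ' i) x) (hφx : ∀ i, φ i x = 0)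
    (hg : ∀ j, HasFDerivAt (g j) (g' j) x) (hgx : ∀ j, g j x = 0)
    (hind : LinearIndependent ℝ (Sum.elim g' φ')) :
    ∃ (β : J → ℝ) (α : K → ℝ), (∀ j, β j ≤ 0) ∧ Ψ' = ∑ j, β j • g' j + ∑ i, α i • φ' i := by
  have hcone : ∀ v, (∀ s ∈ range Sum.inl, Sum.elim g' φ' s v ≤ 0) →
      (∀ s ∉ range Sum.inl, Sum.elim g' φ' s v = 0) → 0 ≤ Ψ' v := fun v hgv hφv =>
    hmin.hasFDerivWithinAt_nonneg hΨ.hasFDerivWithinAt <|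
      mem_posTangentConeAt_constraintSet hφ hφx hg hgx hind (fun i => hφv (.inr i) (by simp))
        fun j => hgv (.inl j) (mem_range_self j)
  obtain ⟨c, hc, hΨ'⟩ := hind.exists_eq_sum_of_forall_nonneg _ hcone
  exact ⟨fun j => c (.inl j), fun i => c (.inr i), fun j => hc _ (mem_range_self j),
    by simpa [Fintype.sum_sum_type] using hΨ'⟩

end ActiveConstraints

theorem kuhn_tucker_general {n k r : ℕ}
    (Ψ : EuclideanSpace ℝ (Fin n) → ℝ) (hΨ : ContDiff ℝ 1 Ψ)
    (φ : Fin k → EuclideanSpace ℝ (Fin n) → ℝ) (hφ : ∀ i, ContDiff ℝ 1 (φ i))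
    (h : Fin r → EuclideanSpace ℝ (Fin n) → ℝ) (hh : ∀ j, ContDiff ℝ 1 (h j))
    (xstar : EuclideanSpace ℝ (Fin n))
    (hxφ : ∀ i, φ i xstar = 0)
    (δ : ℝ) (hδ : 0 < δ)
    (hmin : ∀ x : EuclideanSpace ℝ (Fin n),
      (∀ i, φ i x = 0) → (∀ j, h j x ≤ 0) → ‖x - xstar‖ ≤ δ → Ψ xstar ≤ Ψ x)
    (I : Finset (Fin r))
    (hact : ∀ j ∈ I, h j xstar = 0)
    (hinact : ∀ j ∉ I, h j xstar < 0)
    (hind : LinearIndependent ℝ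
      (Sum.elim (fun j : {j // j ∈ I} => fderiv ℝ (h j) xstar)
        (fun i : Fin k => fderiv ℝ (φ i) xstar))) :
    ∃ (α : Fin k → ℝ) (β : Fin r → ℝ) (lamc : ℝ),
      (∀ j, β j ≤ 0) ∧ (∀ j ∉ I, β j = 0) ∧ lamc ≤ 0 ∧
      ¬(α = 0 ∧ β = 0 ∧ lamc = 0) ∧
      (∑ i, α i • fderiv ℝ (φ i) xstar) + (∑ j, β j • fderiv ℝ (h j) xstar)
        + lamc • fderiv ℝ Ψ xstar = 0 := by
  have hloc : IsLocalMinOn Ψ (constraintSet φ h) xstar := by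
    filter_upwards [self_mem_nhdsWithin,
      mem_nhdsWithin_of_mem_nhds (Metric.closedBall_mem_nhds xstar hδ)] with y ⟨hyφ, hyh⟩ hyδ
    exact hmin y hyφ hyh (mem_closedBall_iff_norm.1 hyδ)
  have hloc_active := hloc.constraintSet_drop_inactive I
    (fun j _ => (hh j).continuous.continuousAt) hinact
  obtain ⟨β, α, hβ, hΨ'⟩ := hloc_active.exists_multipliers
      (hΨ.differentiable one_ne_zero xstar).hasFDerivAt
      (fun i => (hφ i).contDiffAt.hasStrictFDerivAt one_ne_zero) hxφ
      (fun j => ((hh j).differentiable one_ne_zero _).hasFDerivAt) (fun j => hact j j.2) hind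
  refine ⟨α, fun j => if hj : j ∈ I then β ⟨j, hj⟩ else 0, -1, fun j => ?_,
    fun j hj => dif_neg hj, by norm_num, fun hzero => by norm_num at hzero, ?_⟩
  · dsimp only
    split_ifs
    exacts [hβ _, le_rfl]
  · have hsum : ∑ j, (if hj : j ∈ I then β ⟨j, hj⟩ else 0) • fderiv ℝ (h j) xstar =
        ∑ j : I, β j • fderiv ℝ (h j) xstar := by
      simp_rw [dite_smul, zero_smul]
      exact (Finset.sum_attach_eq_sum_dite I fun j => β j • fderiv ℝ (h j) xstar).symm
    rw [hsum, hΨ', neg_one_smul]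
    abel

/-- Kuhn–Tucker conditions: at a local minimum of `Ψ` on the set defined by the
equality constraints `φ i = 0` and inequality constraints `h j ≤ 0`, assuming the
gradients of the equality constraints and of the active inequality constraints are
linearly independent, there exist multipliers `α`, `β ≤ 0` (supported on the active
set `I`) and `lamc ≤ 0`, not all zero, with
`∑ α_i ∇φ_i(x⋆) + ∑ β_j ∇h_j(x⋆) + lamc ∇Ψ(x⋆) = 0`. -/
theorem kuhn_tucker {n k r : ℕ}
    (Ψ : EuclideanSpace ℝ (Fin n) → ℝ) (hΨ : ContDiff ℝ 1 Ψ)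
    (φ : Fin k → EuclideanSpace ℝ (Fin n) → ℝ) (hφ : ∀ i, ContDiff ℝ 1 (φ i))
    (h : Fin r → EuclideanSpace ℝ (Fin n) → ℝ) (hh : ∀ j, ContDiff ℝ 1 (h j))
    (xstar : EuclideanSpace ℝ (Fin n))
    (hxφ : ∀ i, φ i xstar = 0) (hxh : ∀ j, h j xstar ≤ 0)
    (δ : ℝ) (hδ : 0 < δ)
    (hmin : ∀ x : EuclideanSpace ℝ (Fin n),
      (∀ i, φ i x = 0) → (∀ j, h j x ≤ 0) → ‖x - xstar‖ ≤ δ → Ψ xstar ≤ Ψ x)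
    (I : Finset (Fin r))
    (hact : ∀ j ∈ I, h j xstar = 0)
    (hinact : ∀ j ∉ I, h j xstar < 0)
    (hind : LinearIndependent ℝ
      (Sum.elim (fun j : {j // j ∈ I} => fderiv ℝ (h j) xstar)
        (fun i : Fin k => fderiv ℝ (φ i) xstar))) :
    ∃ (α : Fin k → ℝ) (β : Fin r → ℝ) (lamc : ℝ),
      (∀ j, β j ≤ 0) ∧ (∀ j ∉ I, β j = 0) ∧ lamc ≤ 0 ∧
      ¬(α = 0 ∧ β = 0 ∧ lamc = 0) ∧
      (∑ i, α i • fderiv ℝ (φ i) xstar) + (∑ j, β j • fderiv ℝ (h j) xstar)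
        + lamc • fderiv ℝ Ψ xstar = 0 :=
  kuhn_tucker_general Ψ hΨ φ hφ h hh xstar hxφ δ hδ hmin I hact hinact hind
end
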